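/- Let p be an odd prime with Pisano period l_p = p−1 and β(p) = 2, and let C = ⟨f(x)⟩ be the cyclic code of length p−1 over F_p generated by the Fibonacci polynomial f(x). Then the weight distribution of C is: A_0 = 1, A_{p−3} = (p−1)²/2, A_{p−1} = (p−1)(p+3)/2, and A_w = 0 for all other weights w, where A_w denotes the number of codewords of C of Hamming weight w. -/

import Mathlib

/-!
If `l_p = p - 1`, then `x² = x + 1` has two distinct roots `α ≠ β` in `𝔽_p`, and Binet's formula
`F_n (α - β) = αⁿ - βⁿ` shows that the cyclic shifts of the Fibonacci vector span exactly the
two-dimensional code `{(s αⁱ + t βⁱ)ᵢ : s, t ∈ 𝔽_p}`. Such a codeword vanishes at `i` iff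
`(α/β)ⁱ = -t/s`, so a nonzero codeword has either no zero coordinate or exactly one in each
residue class modulo `d = ord(α/β)`, i.e. `l_p / d` of them. As `F_n = 0 ↔ (α/β)ⁿ = 1`, also
`β(p) = l_p / d`; so `β(p) = 2` gives `p - 1 = 2d`, and the nonzero weights are `p - 3`, taken by
the `(p - 1) d` pairs with `s ≠ 0` and `-t/s ∈ ⟨α/β⟩`, and `p - 1`.
-/

open Polynomial

/-- The Fibonacci sequence over `ZMod p`: `F 0 = 0`, `F 1 = 1`, `F (n+2) = F (n+1) + F n`. -/
def fibMod (p : ℕ) : ℕ → ZMod p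
  | 0 => 0
  | 1 => 1
  | n + 2 => fibMod p (n + 1) + fibMod p n

/-- The Pisano period of `p`: the least `t > 0` with `F t = F 0 = 0` and `F (t+1) = F 1 = 1`. -/
noncomputable def pisano (p : ℕ) : ℕ :=
  sInf {t : ℕ | 0 < t ∧ fibMod p t = 0 ∧ fibMod p (t + 1) = 1}

/-- `β(p)`: the number of indices `0 ≤ i < l_p` with `F i = 0` in `ZMod p`. -/
noncomputable def betaP (p : ℕ) : ℕ :=
  ((Finset.range (pisano p)).filter fun i => fibMod p i = 0).card

/-- The Fibonacci polynomial `f(x) = ∑_{i=0}^{l_p - 1} F_i x^i` over `ZMod p`. -/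
noncomputable def fibPoly (p : ℕ) : (ZMod p)[X] :=
  ∑ i ∈ Finset.range (pisano p), C (fibMod p i) * X ^ i

/-- Cyclic shift of a vector of length `l`: the shift `v ↦ (v_{l-1}, v_0, …, v_{l-2})`,
which corresponds to multiplication by `x` modulo `x^l - 1` on coefficient vectors. -/
def cyclicShift (p l : ℕ) (v : Fin l → ZMod p) : Fin l → ZMod p :=
  fun i => v ⟨((i : ℕ) + (l - 1)) % l, Nat.mod_lt _ i.pos⟩

/-- The coefficient vector of length `l` of a polynomial. -/
def polyVec (p l : ℕ) (g : (ZMod p)[X]) : Fin l → ZMod p := fun i => g.coeff i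

/-- The cyclic code of length `l` generated by `g`: the ideal generated by the image of `g`
in `F_p[x]/(x^l - 1)`, identified with the subspace of `F_p^l` of coefficient vectors via
`a_0 + a_1 x + ⋯ + a_{l-1} x^{l-1} ↦ (a_0, …, a_{l-1})`; equivalently (since multiplication
by `x` is the cyclic shift), the `F_p`-span of all cyclic shifts of the coefficient vector
of `g`. -/
noncomputable def cyclicCode (p l : ℕ) (g : (ZMod p)[X]) :
    Submodule (ZMod p) (Fin l → ZMod p) :=
  Submodule.span (ZMod p) {w | ∃ k : ℕ, w = (cyclicShift p l)^[k] (polyVec p l g)}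

/-- The cyclic code of length `l` generated by the Fibonacci polynomial `f(x)`. -/
noncomputable def fibCode (p l : ℕ) : Submodule (ZMod p) (Fin l → ZMod p) :=
  cyclicCode p l (fibPoly p)

open Finset

theorem mul_sub_eq_pow_sub_pow_of_fib_recurrence {R : Type*} [CommRing R] {G : ℕ → R}
    (h0 : G 0 = 0) (h1 : G 1 = 1) (hrec : ∀ n, G (n + 2) = G (n + 1) + G n) {a b : R}
    (ha : a ^ 2 = a + 1) (hb : b ^ 2 = b + 1) (n : ℕ) : G n * (a - b) = a ^ n - b ^ n := by
  induction n using Nat.twoStepInduction with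
  | zero => simp [h0]
  | one => simp [h1]
  | more n ih₀ ih₁ =>
    rw [hrec, add_mul, ih₀, ih₁]
    linear_combination (-a ^ n) * ha + b ^ n * hb

theorem fibMod_mul_sub_eq_pow_sub_pow {p : ℕ} {R : Type*} [CommRing R] [Algebra (ZMod p) R]
    {a b : R} (ha : a ^ 2 = a + 1) (hb : b ^ 2 = b + 1) (n : ℕ) :
    algebraMap (ZMod p) R (fibMod p n) * (a - b) = a ^ n - b ^ n :=
  mul_sub_eq_pow_sub_pow_of_fib_recurrence (G := fun n => algebraMap (ZMod p) R (fibMod p n))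
    (by simp [fibMod]) (by simp [fibMod]) (fun n => by simp [fibMod]) ha hb n

theorem fibMod_pisano {p : ℕ} (h : pisano p ≠ 0) :
    fibMod p (pisano p) = 0 ∧ fibMod p (pisano p + 1) = 1 := by
  have hne : {t | 0 < t ∧ fibMod p t = 0 ∧ fibMod p (t + 1) = 1}.Nonempty :=
    Set.nonempty_iff_ne_empty.mpr fun hempty => h <| by rw [pisano, hempty, Nat.sInf_empty]
  exact (Nat.sInf_mem hne).2

theorem fibPoly_coeff {p i : ℕ} (hi : i < pisano p) : (fibPoly p).coeff i = fibMod p i := by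
  simp [fibPoly, coeff_C_mul, coeff_X_pow, hi]

theorem polyVec_fibPoly {p l : ℕ} (hl : l ≤ pisano p) :
    polyVec p l (fibPoly p) = fun i : Fin l => fibMod p i :=
  funext fun i => fibPoly_coeff (i.isLt.trans_le hl)

theorem exists_algebraMap_eq_of_pow_card_eq_self {K L : Type*} [Field K] [Fintype K] [Field L]
    [Algebra K L] {x : L} (hx : x ^ Fintype.card K = x) : ∃ a : K, algebraMap K L a = x := by
  set P : K[X] := X ^ Fintype.card K - X
  have hP : P ≠ 0 := FiniteField.X_pow_card_sub_X_ne_zero K Fintype.one_lt_card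
  have hcard : Multiset.card P.roots = P.natDegree := by
    rw [FiniteField.roots_X_pow_card_sub_X,
      FiniteField.X_pow_card_sub_X_natDegree_eq K Fintype.one_lt_card]
    exact card_univ
  have hroots := roots_map_of_injective_of_card_eq_natDegree (algebraMap K L).injective hcard
  have hx' : x ∈ (P.map (algebraMap K L)).roots := by
    rw [mem_roots ((Polynomial.map_ne_zero_iff (algebraMap K L).injective).mpr hP)]
    simp [P, hx]
  rw [← hroots, FiniteField.roots_X_pow_card_sub_X] at hx'
  simpa using hx'

/-- If `x² - x - 1` had no root in `𝔽_p`, its root `A` in the field `𝔽_p[x]/(x² - x - 1)` would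
satisfy `A^(p-1) = 1` by Binet's formula, and hence lie in `𝔽_p`. -/
theorem exists_sq_eq_add_one_of_fibMod {p : ℕ} [Fact p.Prime] (h0 : fibMod p (p - 1) = 0)
    (h1 : fibMod p p = 1) : ∃ a : ZMod p, a ^ 2 = a + 1 := by
  by_contra! hno
  set P : (ZMod p)[X] := X ^ 2 - X - 1
  have hPdeg : P.natDegree = 2 := by simp only [P]; compute_degree!
  have : Fact (Irreducible P) := ⟨irreducible_of_degree_le_three_of_not_isRoot
    (by simp [hPdeg]) fun x hx => hno x (by simp [P] at hx; linear_combination hx)⟩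
  set A : AdjoinRoot P := AdjoinRoot.root P
  have hA : A ^ 2 = A + 1 := by
    have := AdjoinRoot.eval₂_root P
    simp only [P, eval₂_sub, eval₂_X_pow, eval₂_X, eval₂_one] at this
    linear_combination this
  have hA_notMem : ∀ c : ZMod p, algebraMap (ZMod p) (AdjoinRoot P) c ≠ A := by
    intro c hc
    rw [← hc] at hA
    exact hno c ((algebraMap (ZMod p) (AdjoinRoot P)).injective (by simpa using hA))
  have hAB : A - (1 - A) ≠ 0 := by
    intro h
    refine hA_notMem 2⁻¹ ?_
    rw [map_inv₀, map_ofNat]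
    exact inv_eq_of_mul_eq_one_right (by linear_combination h)
  have hB : (1 - A) ^ 2 = (1 - A) + 1 := by linear_combination hA
  have hbinet := fibMod_mul_sub_eq_pow_sub_pow (p := p) hA hB
  have hpow : A ^ (p - 1) = (1 - A) ^ (p - 1) := by
    have := hbinet (p - 1)
    rwa [h0, map_zero, zero_mul, eq_comm, sub_eq_zero] at this
  have hp : p ≠ 0 := (Fact.out : p.Prime).ne_zero
  have hA1 : A ^ (p - 1) = 1 := by
    have := hbinet p
    rw [h1, map_one, one_mul, ← pow_sub_one_mul hp, ← pow_sub_one_mul hp, ← hpow,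
      ← mul_sub] at this
    exact (mul_eq_right₀ hAB).mp this.symm
  obtain ⟨a, ha⟩ := exists_algebraMap_eq_of_pow_card_eq_self (K := ZMod p) (x := A)
    (by rw [ZMod.card, ← pow_sub_one_mul hp, hA1, one_mul])
  exact hA_notMem a ha

theorem exists_sq_eq_add_one_ne_of_pisano_eq_sub_one {p : ℕ} [Fact p.Prime]
    (hl : pisano p = p - 1) : ∃ a b : ZMod p, a ^ 2 = a + 1 ∧ b ^ 2 = b + 1 ∧ a ≠ b := by
  have hp : p.Prime := Fact.out
  obtain ⟨h0, h1⟩ := fibMod_pisano (p := p) (by have := hp.two_le; omega)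
  rw [hl] at h0 h1
  rw [Nat.sub_add_cancel hp.one_le] at h1
  obtain ⟨a, ha⟩ := exists_sq_eq_add_one_of_fibMod h0 h1
  have h5 : (5 : ZMod p) ≠ 0 := by
    intro h5
    have hp5 : p ∣ 5 := (ZMod.natCast_eq_zero_iff 5 p).mp (by exact_mod_cast h5)
    obtain rfl := (Nat.prime_dvd_prime_iff_eq hp Nat.prime_five).mp hp5
    -- `F₄ = 3` in `𝔽₅`
    exact absurd h0 (by decide)
  exact ⟨a, 1 - a, ha, by linear_combination ha,
    fun h => h5 (by linear_combination (-4) * ha + (2 * a - 1) * h)⟩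

theorem Nat.card_filter_range_modEq {d : ℕ} (hd : 0 < d) (k j : ℕ) :
    #{i ∈ range (d * k) | i ≡ j [MOD d]} = k := by
  have hj : j % d < d := Nat.mod_lt j hd
  refine (card_nbij' (· / d) (fun q => d * q + j % d) ?_ ?_ ?_ ?_).trans (card_range k)
  · intro i hi
    simp only [mem_coe, mem_filter, mem_range] at hi
    exact mem_range.mpr (Nat.div_lt_of_lt_mul hi.1)
  · intro q hq
    simp only [coe_range, Set.mem_Iio] at hq
    simp only [mem_coe, mem_filter, mem_range]
    refine ⟨by nlinarith, ?_⟩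
    simp [Nat.ModEq]
  · intro i hi
    simp only [mem_coe, mem_filter] at hi
    exact (congrArg (d * (i / d) + ·) (hi.2 : i % d = j % d)).symm.trans (Nat.div_add_mod i d)
  · intro q _
    simp [Nat.mul_add_div hd, Nat.div_eq_of_lt hj]

theorem card_filter_range_pow_eq_pow {M : Type*} [Monoid M] [DecidableEq M] {g : M} {l : ℕ}
    (hl : l ≠ 0) (hg : g ^ l = 1) (j : ℕ) : #{i ∈ range l | g ^ i = g ^ j} = l / orderOf g := by
  have hfin : IsOfFinOrder g := isOfFinOrder_iff_pow_eq_one.mpr ⟨l, Nat.pos_of_ne_zero hl, hg⟩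
  obtain ⟨k, rfl⟩ := orderOf_dvd_of_pow_eq_one hg
  simp_rw [hfin.pow_eq_pow_iff_modEq]
  rw [Nat.card_filter_range_modEq hfin.orderOf_pos, Nat.mul_div_cancel_left _ hfin.orderOf_pos]

theorem Fin.card_filter_univ_eq_card_filter_range {l : ℕ} (P : ℕ → Prop) [DecidablePred P] :
    #{i : Fin l | P i} = #{i ∈ range l | P i} := by
  simp only [card_filter]
  exact Fin.sum_univ_eq_sum_range (fun i => if P i then 1 else 0) l

theorem hammingNorm_add_card_filter_eq_zero {ι R : Type*} [Fintype ι] [Zero R] [DecidableEq R]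
    (v : ι → R) : hammingNorm v + #{i | v i = 0} = Fintype.card ι := by
  rw [hammingNorm, add_comm]
  exact card_filter_add_card_filter_not _

theorem Set.ncard_setOf_mem_range_and {α β : Type*} {f : α → β} (hf : Function.Injective f)
    (P : β → Prop) : {y | y ∈ Set.range f ∧ P y}.ncard = {x | P (f x)}.ncard := by
  rw [← Set.ncard_preimage_of_injective_subset_range hf (Set.sep_subset _ _)]
  congr 1
  ext x
  simp

theorem orderOf_div_ne_one {G : Type*} [GroupWithZero G] {a b : G} (hb : b ≠ 0) (hab : a ≠ b) :
    orderOf (a / b) ≠ 1 :=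
  fun h => hab ((div_eq_one_iff_eq hb).mp (orderOf_eq_one_iff.mp h))

theorem fibMod_eq_zero_iff_div_pow_eq_one {p : ℕ} [Fact p.Prime] {a b : ZMod p}
    (ha : a ^ 2 = a + 1) (hb : b ^ 2 = b + 1) (hab : a ≠ b) (n : ℕ) :
    fibMod p n = 0 ↔ (a / b) ^ n = 1 := by
  have hb0 : b ≠ 0 := by rintro rfl; simp at hb
  rw [div_pow, div_eq_one_iff_eq (pow_ne_zero n hb0), ← sub_eq_zero (a := a ^ n),
    ← fibMod_mul_sub_eq_pow_sub_pow (p := p) (R := ZMod p) ha hb n]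
  simp [sub_ne_zero.mpr hab]

theorem betaP_mul_orderOf_eq_pisano {p : ℕ} [Fact p.Prime] {a b : ZMod p}
    (ha : a ^ 2 = a + 1) (hb : b ^ 2 = b + 1) (hab : a ≠ b) (hl : pisano p ≠ 0)
    (hper : (a / b) ^ pisano p = 1) : betaP p * orderOf (a / b) = pisano p := by
  have hbeta : betaP p = pisano p / orderOf (a / b) := by
    rw [betaP, ← card_filter_range_pow_eq_pow hl hper 0]
    congr 1
    exact filter_congr fun n _ => by rw [pow_zero, fibMod_eq_zero_iff_div_pow_eq_one ha hb hab]
  rw [hbeta, Nat.div_mul_cancel (orderOf_dvd_of_pow_eq_one hper)]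

def geomComb {K : Type*} [CommSemiring K] (l : ℕ) (a b : K) : K × K →ₗ[K] (Fin l → K) where
  toFun st i := st.1 * a ^ (i : ℕ) + st.2 * b ^ (i : ℕ)
  map_add' _ _ := by ext; simp only [Prod.fst_add, Prod.snd_add, Pi.add_apply]; ring
  map_smul' _ _ := by ext; simp only [Prod.smul_fst, Prod.smul_snd, smul_eq_mul,
    RingHom.id_apply, Pi.smul_apply]; ring

@[simp]
theorem geomComb_apply {K : Type*} [CommSemiring K] (l : ℕ) (a b : K) (st : K × K) (i : Fin l) :
    geomComb l a b st i = st.1 * a ^ (i : ℕ) + st.2 * b ^ (i : ℕ) :=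
  rfl

section Field

variable {K : Type*} [Field K] {l : ℕ} {a b : K}

theorem geomComb_injective (hl : 2 ≤ l) (hab : a ≠ b) : Function.Injective (geomComb l a b) := by
  refine (injective_iff_map_eq_zero _).mpr fun st hst => ?_
  have h0 := congrFun hst ⟨0, by omega⟩
  have h1 := congrFun hst ⟨1, by omega⟩
  simp only [geomComb_apply, pow_zero, mul_one, pow_one, Pi.zero_apply] at h0 h1
  have hs : st.1 = 0 := by
    have : st.1 * (a - b) = 0 := by linear_combination h1 - b * h0
    exact (mul_eq_zero.mp this).resolve_right (sub_ne_zero.mpr hab)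
  exact Prod.ext hs (by simpa [hs] using h0)

theorem geomComb_apply_eq_zero_iff (hb : b ≠ 0) {s t : K} {i : Fin l} :
    geomComb l a b (s, t) i = 0 ↔ t = -(s * (a / b) ^ (i : ℕ)) := by
  have hbi : b ^ (i : ℕ) ≠ 0 := pow_ne_zero _ hb
  rw [geomComb_apply, div_pow]
  constructor <;> intro h
  · field_simp
    linear_combination h
  · rw [h]
    field_simp
    ring

theorem span_pair_mul_eq_top {u st : K × K} (hu : u.1 ≠ u.2) (hs : st.1 ≠ 0) (ht : st.2 ≠ 0) :
    Submodule.span K {st, u * st} = ⊤ := by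
  refine eq_top_iff.mpr fun x _ => Submodule.mem_span_pair.mpr ?_
  have hu' : u.1 - u.2 ≠ 0 := sub_ne_zero.mpr hu
  set e := (x.1 / st.1 - x.2 / st.2) / (u.1 - u.2)
  refine ⟨x.1 / st.1 - e * u.1, e, Prod.ext ?_ ?_⟩
  · simp only [Prod.fst_add, Prod.smul_fst, Prod.fst_mul, smul_eq_mul]
    field_simp
    ring
  · simp only [Prod.snd_add, Prod.smul_snd, Prod.snd_mul, smul_eq_mul, e]
    field_simp
    ring

end Field

theorem pow_sub_one_ne_pow_sub_one {G : Type*} [GroupWithZero G] {a b : G} {l : ℕ}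
    (hl : l ≠ 0) (ha : a ^ l = 1) (hb : b ^ l = 1) (hab : a ≠ b) : a ^ (l - 1) ≠ b ^ (l - 1) := by
  intro h
  refine hab (mul_left_cancel₀ (a := a ^ (l - 1)) ?_ ?_)
  · rintro h0
    simp [← pow_sub_one_mul hl, h0] at ha
  · rw [pow_sub_one_mul hl, h, pow_sub_one_mul hl, ha, hb]

theorem cyclicShift_geomComb {p l : ℕ} {a b : ZMod p} (ha : a ^ l = 1) (hb : b ^ l = 1)
    (st : ZMod p × ZMod p) :
    cyclicShift p l (geomComb l a b st) = geomComb l a b ((a ^ (l - 1), b ^ (l - 1)) * st) := by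
  ext i
  simp only [cyclicShift, geomComb_apply, Prod.fst_mul, Prod.snd_mul, ← pow_eq_pow_mod _ ha,
    ← pow_eq_pow_mod _ hb, pow_add]
  ring

theorem cyclicCode_eq_range_geomComb {p l : ℕ} [Fact p.Prime] {g : (ZMod p)[X]}
    {a b : ZMod p} {st : ZMod p × ZMod p} (hl : l ≠ 0) (ha : a ^ l = 1) (hb : b ^ l = 1)
    (hab : a ≠ b) (hs : st.1 ≠ 0) (ht : st.2 ≠ 0) (hg : polyVec p l g = geomComb l a b st) :
    cyclicCode p l g = LinearMap.range (geomComb l a b) := by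
  set u : ZMod p × ZMod p := (a ^ (l - 1), b ^ (l - 1))
  have hshift (k : ℕ) : (cyclicShift p l)^[k] (polyVec p l g) = geomComb l a b (u ^ k * st) := by
    induction k with
    | zero => simp [hg]
    | succ k ih =>
      rw [Function.iterate_succ_apply', ih, cyclicShift_geomComb ha hb, pow_succ', mul_assoc]
  apply le_antisymm
  · rw [cyclicCode, Submodule.span_le]
    rintro _ ⟨k, rfl⟩
    rw [hshift]
    exact LinearMap.mem_range_self _ _
  · rw [LinearMap.range_eq_map,
      ← span_pair_mul_eq_top (u := u) (pow_sub_one_ne_pow_sub_one hl ha hb hab) hs ht,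
      Submodule.map_span, cyclicCode, Set.image_pair]
    refine Submodule.span_mono (Set.insert_subset ⟨0, ?_⟩ (Set.singleton_subset_iff.mpr ⟨1, ?_⟩))
    · rw [hshift, pow_zero, one_mul]
    · rw [hshift, pow_one]

theorem fibCode_eq_range_geomComb {p l : ℕ} [Fact p.Prime] {a b : ZMod p} (hl : l ≠ 0)
    (hlp : l ≤ pisano p) (ha : a ^ 2 = a + 1) (hb : b ^ 2 = b + 1) (hab : a ≠ b)
    (hal : a ^ l = 1) (hbl : b ^ l = 1) :
    fibCode p l = LinearMap.range (geomComb l a b) := by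
  have hab' : a - b ≠ 0 := sub_ne_zero.mpr hab
  refine cyclicCode_eq_range_geomComb (st := ((a - b)⁻¹, -(a - b)⁻¹)) hl hal hbl hab
    (inv_ne_zero hab') (neg_ne_zero.mpr (inv_ne_zero hab')) ?_
  ext i
  have := fibMod_mul_sub_eq_pow_sub_pow (p := p) (R := ZMod p) ha hb i
  rw [polyVec_fibPoly hlp, geomComb_apply]
  field_simp
  simpa [sub_eq_add_neg] using this

section Weights

variable {K : Type*} [Field K]

/-- For `g = a / b` with `aˡ = bˡ = 1`: the pairs `(s, t)` whose codeword `(s aⁱ + t bⁱ)ᵢ` is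
nonzero and has a zero coordinate. -/
def ratioPowPairs (g : K) : Set (K × K) :=
  {st | st.1 ≠ 0 ∧ ∃ j : ℕ, st.2 = -(st.1 * g ^ j)}

theorem ncard_ratioPowPairs [Finite K] {g : K} (hg : IsOfFinOrder g) :
    (ratioPowPairs g).ncard = (Nat.card K - 1) * orderOf g := by
  have himage : ratioPowPairs g = (fun x : K × K => (x.1, -(x.1 * x.2))) ''
      ({0}ᶜ ×ˢ ((g ^ ·) '' Set.Iio (orderOf g))) := by
    ext ⟨s, t⟩
    simp only [ratioPowPairs, Set.mem_ofPred_eq, Set.mem_image, Set.mem_prod, Set.mem_compl_iff,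
      Set.mem_singleton_iff, Set.mem_Iio, Prod.exists, Prod.mk.injEq]
    constructor
    · rintro ⟨hs, j, rfl⟩
      exact ⟨s, g ^ (j % orderOf g), ⟨hs, j % orderOf g, Nat.mod_lt _ hg.orderOf_pos, rfl⟩, rfl,
        by rw [pow_mod_orderOf]⟩
    · rintro ⟨s, _, ⟨hs, j, -, rfl⟩, rfl, rfl⟩
      exact ⟨hs, j, rfl⟩
  have hinj : Set.InjOn (fun x : K × K => (x.1, -(x.1 * x.2))) ({0}ᶜ ×ˢ Set.univ) := by
    rintro ⟨s, c⟩ ⟨hs, -⟩ ⟨s', c'⟩ - h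
    simp only [Prod.mk.injEq, neg_inj] at h
    obtain ⟨rfl, h⟩ := h
    exact Prod.ext rfl (mul_left_cancel₀ hs h)
  rw [himage, (hinj.mono (Set.prod_mono le_rfl (Set.subset_univ _))).ncard_image,
    Set.ncard_prod, pow_injOn_Iio_orderOf.ncard_image, Set.ncard_Iio_nat,
    Set.ncard_compl, Set.ncard_singleton]

variable [DecidableEq K] {l : ℕ} {a b : K}

theorem hammingNorm_geomComb_of_mem (hl : l ≠ 0) (ha : a ^ l = 1) (hb : b ^ l = 1)
    {st : K × K} (hst : st ∈ ratioPowPairs (a / b)) :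
    hammingNorm (geomComb l a b st) = l - l / orderOf (a / b) := by
  have hg : (a / b) ^ l = 1 := by rw [div_pow, ha, hb, div_one]
  obtain ⟨s, t⟩ := st
  obtain ⟨hs, j, ht⟩ := hst
  dsimp only at hs ht
  subst ht
  have hzeros := hammingNorm_add_card_filter_eq_zero (geomComb l a b (s, -(s * (a / b) ^ j)))
  simp only [geomComb_apply_eq_zero_iff (IsUnit.of_pow_eq_one hb hl).ne_zero, neg_inj,
    mul_right_inj' hs, eq_comm (a := (a / b) ^ j), Fintype.card_fin] at hzeros
  rw [Fin.card_filter_univ_eq_card_filter_range (fun i => (a / b) ^ i = (a / b) ^ j),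
    card_filter_range_pow_eq_pow hl hg] at hzeros
  omega

theorem hammingNorm_geomComb_of_notMem (hb : b ≠ 0) {st : K × K} (h0 : st ≠ 0)
    (hst : st ∉ ratioPowPairs (a / b)) : hammingNorm (geomComb l a b st) = l := by
  have hzeros := hammingNorm_add_card_filter_eq_zero (geomComb l a b st)
  suffices #{i | geomComb l a b st i = 0} = 0 by rwa [this, add_zero, Fintype.card_fin] at hzeros
  obtain ⟨s, t⟩ := st
  refine card_eq_zero.mpr (filter_eq_empty_iff.mpr fun i _ ht => ?_)
  rw [geomComb_apply_eq_zero_iff hb] at ht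
  by_cases hs : s = 0
  · exact h0 (by simp [hs, ht])
  · exact hst ⟨hs, i, ht⟩

open Classical in
theorem hammingNorm_geomComb (hl : l ≠ 0) (ha : a ^ l = 1) (hb : b ^ l = 1) (st : K × K) :
    hammingNorm (geomComb l a b st) =
      if st = 0 then 0 else if st ∈ ratioPowPairs (a / b) then l - l / orderOf (a / b) else l := by
  split_ifs with h0 hT
  · rw [h0, map_zero, hammingNorm_zero]
  · exact hammingNorm_geomComb_of_mem hl ha hb hT
  · exact hammingNorm_geomComb_of_notMem (IsUnit.of_pow_eq_one hb hl).ne_zero h0 hT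

theorem ncard_setOf_hammingNorm_geomComb [Finite K] (hl : l ≠ 0) (ha : a ^ l = 1)
    (hb : b ^ l = 1) (hab : a ≠ b) (w : ℕ) :
    {st | hammingNorm (geomComb l a b st) = w}.ncard =
      if w = 0 then 1
      else if w = l - l / orderOf (a / b) then (Nat.card K - 1) * orderOf (a / b)
      else if w = l then Nat.card K ^ 2 - 1 - (Nat.card K - 1) * orderOf (a / b)
      else 0 := by
  classical
  have hg : (a / b) ^ l = 1 := by rw [div_pow, ha, hb, div_one]
  have hfin : IsOfFinOrder (a / b) := isOfFinOrder_iff_pow_eq_one.mpr ⟨l, Nat.pos_of_ne_zero hl, hg⟩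
  have hdl : orderOf (a / b) ∣ l := orderOf_dvd_of_pow_eq_one hg
  have hd1 := orderOf_div_ne_one (IsUnit.of_pow_eq_one hb hl).ne_zero hab
  have hquot : 0 < l / orderOf (a / b) ∧ l / orderOf (a / b) < l :=
    ⟨Nat.div_pos (Nat.le_of_dvd (by omega) hdl) hfin.orderOf_pos,
      Nat.div_lt_self (by omega) (by have := hfin.orderOf_pos; omega)⟩
  have hT0 : (0 : K × K) ∉ ratioPowPairs (a / b) := fun h => h.1 rfl
  have hcard : Nat.card K ^ 2 - 1 - (Nat.card K - 1) * orderOf (a / b) =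
      ({0} ∪ ratioPowPairs (a / b))ᶜ.ncard := by
    rw [Set.ncard_compl, Set.ncard_union_eq (Set.disjoint_singleton_left.mpr hT0),
      Set.ncard_singleton, ncard_ratioPowPairs hfin, Nat.card_prod, sq, Nat.sub_sub]
  split_ifs with hw0 hw1 hw2
  on_goal 1 => convert Set.ncard_singleton (0 : K × K) using 2
  on_goal 2 => convert ncard_ratioPowPairs hfin using 2
  on_goal 3 => rw [hcard]; congr 1
  on_goal 4 => rw [Set.ncard_eq_zero]
  all_goals
    ext st
    rcases eq_or_ne st 0 with rfl | h0
    · simp [hammingNorm_geomComb hl ha hb, hT0]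
      omega
    · by_cases hT : st ∈ ratioPowPairs (a / b) <;>
        simp [hammingNorm_geomComb hl ha hb, h0, hT] <;> omega

end Weights

theorem fibCode_weight_distribution_beta_two_general (p : ℕ) [Fact p.Prime]
    (hl : pisano p = p - 1) (hb : betaP p = 2) :
    Set.ncard {v | v ∈ fibCode p (p - 1) ∧ hammingNorm v = 0} = 1 ∧
      Set.ncard {v | v ∈ fibCode p (p - 1) ∧ hammingNorm v = p - 3} = (p - 1) ^ 2 / 2 ∧
      Set.ncard {v | v ∈ fibCode p (p - 1) ∧ hammingNorm v = p - 1}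
        = (p - 1) * (p + 3) / 2 ∧
      ∀ w : ℕ, w ≠ 0 → w ≠ p - 3 → w ≠ p - 1 →
        Set.ncard {v | v ∈ fibCode p (p - 1) ∧ hammingNorm v = w} = 0 := by
  obtain ⟨α, β, hα, hβ, hαβ⟩ := exists_sq_eq_add_one_ne_of_pisano_eq_sub_one hl
  have hl0 : p - 1 ≠ 0 := by have := (Fact.out : p.Prime).two_le; omega
  have hβ0 : β ≠ 0 := by rintro rfl; simp at hβ
  have hαl : α ^ (p - 1) = 1 := ZMod.pow_card_sub_one_eq_one (by rintro rfl; simp at hα)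
  have hβl : β ^ (p - 1) = 1 := ZMod.pow_card_sub_one_eq_one hβ0
  have hd : p - 1 = 2 * orderOf (α / β) := by
    rw [← hb, ← hl, betaP_mul_orderOf_eq_pisano hα hβ hαβ (hl ▸ hl0)
      (by rw [hl, div_pow, hαl, hβl, div_one])]
  have hd1 := orderOf_div_ne_one hβ0 hαβ
  have hcount (w : ℕ) : {v | v ∈ fibCode p (p - 1) ∧ hammingNorm v = w}.ncard =
      {st | hammingNorm (geomComb (p - 1) α β st) = w}.ncard := by
    rw [fibCode_eq_range_geomComb hl0 hl.ge hα hβ hαβ hαl hβl]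
    exact Set.ncard_setOf_mem_range_and (geomComb_injective (by omega) hαβ) _
  have hsub : p - 1 - (p - 1) / orderOf (α / β) = p - 3 := by
    rw [hd, Nat.mul_div_cancel _ (by omega)]
    omega
  simp only [hcount, ncard_setOf_hammingNorm_geomComb hl0 hαl hβl hαβ, Nat.card_zmod, hsub]
  generalize orderOf (α / β) = d at hd hd1
  have hp : p ^ 2 = d * (p + 3) + 2 * d * d + 1 := by rw [show p = 2 * d + 1 by omega]; ring
  refine ⟨if_pos trivial, ?_, ?_, fun w h0 h3 h1 => by simp [h0, h3, h1]⟩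
  · rw [if_neg (by omega), if_pos trivial, hd, sq, mul_assoc 2 d (2 * d),
      Nat.mul_div_cancel_left _ two_pos]
    ring
  · rw [if_neg (by omega), if_neg (by omega), if_pos trivial, hd, mul_assoc 2 d (p + 3),
      Nat.mul_div_cancel_left _ two_pos]
    omega

/-- Weight distribution for `l_p = p - 1`, `β(p) = 2`:
`A_0 = 1`, `A_{p-3} = (p-1)²/2`, `A_{p-1} = (p-1)(p+3)/2`, and `A_w = 0` otherwise. -/
theorem fibCode_weight_distribution_beta_two (p : ℕ) [Fact p.Prime] (hodd : Odd p)
    (hl : pisano p = p - 1) (hb : betaP p = 2) :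
    Set.ncard {v | v ∈ fibCode p (p - 1) ∧ hammingNorm v = 0} = 1 ∧
      Set.ncard {v | v ∈ fibCode p (p - 1) ∧ hammingNorm v = p - 3} = (p - 1) ^ 2 / 2 ∧
      Set.ncard {v | v ∈ fibCode p (p - 1) ∧ hammingNorm v = p - 1}
        = (p - 1) * (p + 3) / 2 ∧
      ∀ w : ℕ, w ≠ 0 → w ≠ p - 3 → w ≠ p - 1 →
        Set.ncard {v | v ∈ fibCode p (p - 1) ∧ hammingNorm v = w} = 0 :=
  fibCode_weight_distribution_beta_two_general p hl hb
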